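/- Suppose ν ∈ ℝ^m and μ ∈ ℝ^n have all entries strictly positive and T_E(ν,μ) is nonempty, with CRP decomposition (I_l ∪ J_l)_{l=1,…,d} and CRP-graph relation R. Let (i,j) ∈ (I × J) ∖ E, and let l₁, l₂ ∈ {1,…,d} be such that i ∈ I_{l₁} and j ∈ J_{l₂}. Define the relation R′ by R′(a,b) ⟺ R(a,b) ∨ (a = l₁ ∧ b = l₂ ∧ l₁ ≠ l₂), and let V_c = {l ∈ {1,…,d} : the transitive closure of R′ relates l to itself}. Then the ERP number of T_{E∪{(i,j)}}(ν,μ) equals d − max(|V_c| − 1, 0). -/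

import Mathlib

open scoped Classical

noncomputable section

variable {m n : ℕ}

/-- The transportation polytope `T_E(ν,μ)`: nonnegative `m × n` matrices with row sums `ν`,
column sums `μ`, supported on the edge set `E`. -/
def transportationPolytope (ν : Fin m → ℝ) (μ : Fin n → ℝ)
    (E : Finset (Fin m × Fin n)) : Set (Fin m → Fin n → ℝ) :=
  {x | (∀ i j, 0 ≤ x i j) ∧ (∀ i, ∑ j, x i j = ν i) ∧
    (∀ j, ∑ i, x i j = μ j) ∧ ∀ i j, (i, j) ∉ E → x i j = 0}

/-- The neighborhood `N_F(S) = {j : ∃ i ∈ S, (i,j) ∈ F}`. -/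
def nbr (F : Finset (Fin m × Fin n)) (S : Finset (Fin m)) : Finset (Fin n) :=
  Finset.univ.filter fun j => ∃ i ∈ S, (i, j) ∈ F

/-- `ν` satisfies the capacity condition for `(μ, E)`. -/
def capacityCond (ν : Fin m → ℝ) (μ : Fin n → ℝ) (E : Finset (Fin m × Fin n)) : Prop :=
  ∀ S : Finset (Fin m), ∑ i ∈ S, ν i ≤ ∑ j ∈ nbr E S, μ j

/-- The CRP condition for `(ν, μ, E)`. -/
def crpCond (ν : Fin m → ℝ) (μ : Fin n → ℝ) (E : Finset (Fin m × Fin n)) : Prop :=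
  (∑ i, ν i) = (∑ j, μ j) ∧
  ∀ S : Finset (Fin m), S.Nonempty → S ≠ Finset.univ →
    ∑ i ∈ S, ν i < ∑ j ∈ nbr E S, μ j

/-- The bipartite simple graph `G(F)` on `I ⊔ J` determined by the edge set `F`. -/
def bipartiteGraph (F : Finset (Fin m × Fin n)) : SimpleGraph (Fin m ⊕ Fin n) :=
  SimpleGraph.fromRel fun u v => ∃ i j, u = Sum.inl i ∧ v = Sum.inr j ∧ (i, j) ∈ F

/-- The number of connected components of `G(F)`. -/
def numComponents (F : Finset (Fin m × Fin n)) : ℕ :=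
  Nat.card (bipartiteGraph F).ConnectedComponent

/-- The set `E_r` of redundant edges of `T_E(ν,μ)`. -/
def redundantEdges (ν : Fin m → ℝ) (μ : Fin n → ℝ)
    (E : Finset (Fin m × Fin n)) : Finset (Fin m × Fin n) :=
  E.filter fun e => ∀ x ∈ transportationPolytope ν μ E, x e.1 e.2 = 0

/-- The ERP number of `T_E(ν,μ)`: the number of connected components of `G(E ∖ E_r)`. -/
def erpNumber (ν : Fin m → ℝ) (μ : Fin n → ℝ) (E : Finset (Fin m × Fin n)) : ℕ :=
  numComponents (E \ redundantEdges ν μ E)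

/-- The support edge set `B(x) = {(i,j) ∈ E : x_{ij} > 0}`. -/
def supportEdges (E : Finset (Fin m × Fin n)) (x : Fin m → Fin n → ℝ) :
    Finset (Fin m × Fin n) :=
  E.filter fun e => 0 < x e.1 e.2

/-- The indicator vector `𝟙_S ∈ ℝ^m` of `S ⊆ I`. -/
def indicatorVec (S : Finset (Fin m)) : Fin m → ℝ := fun i => if i ∈ S then 1 else 0

/-- `S ⊆ I` is binding if `∑_{i∈S} ν_i = ∑_{j∈N_E(S)} μ_j`. -/
def IsBinding (ν : Fin m → ℝ) (μ : Fin n → ℝ) (E : Finset (Fin m × Fin n))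
    (S : Finset (Fin m)) : Prop :=
  (∑ i ∈ S, ν i) = ∑ j ∈ nbr E S, μ j

/-- The greatest common divisor of all `m + n` components of `ν` and `μ`. -/
def gcdVec (ν : Fin m → ℕ) (μ : Fin n → ℕ) : ℕ :=
  Nat.gcd (Finset.univ.gcd ν) (Finset.univ.gcd μ)

/-- `d_⋆ = max {1, m + n − (∑ᵢ νᵢ) / gcd(ν,μ)}`. -/
def dStar (ν : Fin m → ℕ) (μ : Fin n → ℕ) : ℕ :=
  max 1 (m + n - (∑ i, ν i) / gcdVec ν μ)

/-- The CRP-gap `δ_F(ν,μ)` of the edge set `F` (computed with respect to the redundant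
edges of `T_F(ν,μ)`). -/
def crpGap (ν : Fin m → ℝ) (μ : Fin n → ℝ) (F : Finset (Fin m × Fin n)) : ℝ :=
  sInf {t : ℝ | ∃ C : Finset (Fin m),
    (∑ i ∈ C, ν i) < (∑ j ∈ nbr (F \ redundantEdges ν μ F) C, μ j) ∧
    t = (∑ j ∈ nbr F C, μ j) - ∑ i ∈ C, ν i}

/-- The CRP-graph relation `R` on the connected components of `G(E ∖ E_r)`:
`R c₁ c₂` holds iff `c₁ ≠ c₂` and some edge `(i,j) ∈ E` has `i` in the demand side of `c₁`
and `j` in the supply side of `c₂`. -/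
def crpRel (ν : Fin m → ℝ) (μ : Fin n → ℝ) (E : Finset (Fin m × Fin n)) :
    (bipartiteGraph (E \ redundantEdges ν μ E)).ConnectedComponent →
    (bipartiteGraph (E \ redundantEdges ν μ E)).ConnectedComponent → Prop :=
  fun c₁ c₂ => c₁ ≠ c₂ ∧ ∃ i j, (i, j) ∈ E ∧
    (bipartiteGraph (E \ redundantEdges ν μ E)).connectedComponentMk (Sum.inl i) = c₁ ∧
    (bipartiteGraph (E \ redundantEdges ν μ E)).connectedComponentMk (Sum.inr j) = c₂

end

/-!
Let `x ∈ T_K` have support `F`. An edge `(a, b) ∈ K` is nonredundant iff the residual graph of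
`x` (edges of `K` from demand to supply, edges of `F` in both directions) leads from `b` back to
`a`: flow can then be pushed around the resulting cycle, while otherwise the nodes reachable
from `b` form a cut that every point of `T_K` leaves empty. Taking for `x` a point of maximal
support `E ∖ E_r` and passing to components of `G(E ∖ E_r)`, the nonredundant edges of `K ⊇ E`
are the edges of `K` closing a cycle of the component digraph. For `K = E` that digraph is the
acyclic CRP-graph; for `K = E ∪ {(i, j)}` it gains the single arc `l₁ → l₂`, every cycle runs
through it, and exactly the cyclic components `V_c` merge into one.
-/

open Relation Filter Topology

section Flows

variable {m n : ℕ} {ν : Fin m → ℝ} {μ : Fin n → ℝ} {K : Finset (Fin m × Fin n)}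

theorem transportationPolytope_mono {E : Finset (Fin m × Fin n)} (hEK : E ⊆ K) :
    transportationPolytope ν μ E ⊆ transportationPolytope ν μ K :=
  fun _ ⟨h0, hr, hc, hz⟩ => ⟨h0, hr, hc, fun a b hab => hz a b fun h => hab (hEK h)⟩

theorem convex_transportationPolytope : Convex ℝ (transportationPolytope ν μ K) := by
  rintro x ⟨hx0, hxr, hxc, hxK⟩ y ⟨hy0, hyr, hyc, hyK⟩ s t hs ht hst
  refine ⟨fun a b => ?_, fun a => ?_, fun b => ?_, fun a b hab => ?_⟩
  · simp only [Pi.add_apply, Pi.smul_apply, smul_eq_mul]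
    have := hx0 a b; have := hy0 a b; positivity
  · simp [Finset.sum_add_distrib, ← Finset.mul_sum, hxr, hyr, ← add_mul, hst]
  · simp [Finset.sum_add_distrib, ← Finset.mul_sum, hxc, hyc, ← add_mul, hst]
  · simp [hxK a b hab, hyK a b hab]

def boundary : (Fin m → Fin n → ℝ) →ₗ[ℝ] (Fin m ⊕ Fin n → ℝ) where
  toFun y := Sum.elim (fun a => ∑ b, y a b) (fun b => -∑ a, y a b)
  map_add' y z := by ext (a | b) <;> simp [Finset.sum_add_distrib, add_comm]
  map_smul' c y := by ext (a | b) <;> simp [Finset.mul_sum]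

@[simp] theorem boundary_inl (y : Fin m → Fin n → ℝ) (a : Fin m) :
    boundary y (.inl a) = ∑ b, y a b := rfl

@[simp] theorem boundary_inr (y : Fin m → Fin n → ℝ) (b : Fin n) :
    boundary y (.inr b) = -∑ a, y a b := rfl

def edgeFlow (a : Fin m) (b : Fin n) : Fin m → Fin n → ℝ :=
  fun p q => if p = a ∧ q = b then 1 else 0

theorem edgeFlow_nonneg (a : Fin m) (b : Fin n) (p : Fin m) (q : Fin n) :
    0 ≤ edgeFlow a b p q := by
  unfold edgeFlow; split_ifs <;> norm_num

theorem edgeFlow_eq_zero {a p : Fin m} {b q : Fin n} (h : (p, q) ≠ (a, b)) :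
    edgeFlow a b p q = 0 :=
  if_neg fun ⟨hp, hq⟩ => h (by rw [hp, hq])

theorem edgeFlow_self (a : Fin m) (b : Fin n) : edgeFlow a b a b = 1 :=
  if_pos ⟨rfl, rfl⟩

theorem boundary_edgeFlow (a : Fin m) (b : Fin n) :
    boundary (edgeFlow a b) = Pi.single (.inl a) 1 - Pi.single (.inr b) 1 := by
  ext (p | q)
  · by_cases hp : p = a <;> simp [edgeFlow, hp]
  · by_cases hq : q = b <;> simp [edgeFlow, hq]

theorem add_smul_mem_transportationPolytope {x w : Fin m → Fin n → ℝ}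
    (hx : x ∈ transportationPolytope ν μ K) (hwK : ∀ p q, (p, q) ∉ K → w p q = 0)
    (hw : boundary w = 0) (ε : ℝ) (hnonneg : ∀ p q, 0 ≤ x p q + ε * w p q) :
    x + ε • w ∈ transportationPolytope ν μ K := by
  obtain ⟨-, hxr, hxc, hxK⟩ := hx
  refine ⟨hnonneg, fun a => ?_, fun b => ?_, fun a b hab => ?_⟩
  · have := congrFun hw (.inl a)
    simp_all [Finset.sum_add_distrib, ← Finset.mul_sum]
  · have := congrFun hw (.inr b)
    simp_all [Finset.sum_add_distrib, ← Finset.mul_sum]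
  · simp [hxK a b hab, hwK a b hab]

theorem exists_pos_add_smul_mem {x w : Fin m → Fin n → ℝ}
    (hx : x ∈ transportationPolytope ν μ K) (hwK : ∀ p q, (p, q) ∉ K → w p q = 0)
    (hw : boundary w = 0) (hneg : ∀ p q, w p q < 0 → 0 < x p q) :
    ∃ ε : ℝ, 0 < ε ∧ x + ε • w ∈ transportationPolytope ν μ K := by
  have hev : ∀ᶠ ε in 𝓝[>] (0 : ℝ), ∀ p q, 0 ≤ x p q + ε * w p q := by
    simp only [eventually_all]
    intro p q
    rcases le_or_gt 0 (w p q) with hwpq | hwpq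
    · filter_upwards [self_mem_nhdsWithin] with ε hε
      have := hx.1 p q
      have : (0 : ℝ) < ε := hε
      positivity
    · have hcont : Tendsto (fun ε => x p q + ε * w p q) (𝓝 0) (𝓝 (x p q + 0 * w p q)) :=
        tendsto_const_nhds.add (tendsto_id.mul tendsto_const_nhds)
      rw [zero_mul, add_zero] at hcont
      exact nhdsWithin_le_nhds ((hcont.eventually (lt_mem_nhds (hneg p q hwpq))).mono
        fun _ h => h.le)
  obtain ⟨ε, hε, hεpos⟩ :=
    (hev.and (self_mem_nhdsWithin : Set.Ioi (0 : ℝ) ∈ 𝓝[>] 0)).exists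
  exact ⟨ε, hεpos, add_smul_mem_transportationPolytope hx hwK hw ε hε⟩

end Flows

section Residual

variable {m n : ℕ} {ν : Fin m → ℝ} {μ : Fin n → ℝ} {F K : Finset (Fin m × Fin n)}

theorem supportEdges_subset {x : Fin m → Fin n → ℝ} : supportEdges K x ⊆ K :=
  Finset.filter_subset _ _

def residualStep (F K : Finset (Fin m × Fin n)) : Fin m ⊕ Fin n → Fin m ⊕ Fin n → Prop
  | .inl a, .inr b => (a, b) ∈ K
  | .inr b, .inl a => (a, b) ∈ F
  | _, _ => False

theorem exists_flow_of_reflTransGen_residualStep (hFK : F ⊆ K) {u v : Fin m ⊕ Fin n}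
    (h : ReflTransGen (residualStep F K) u v) :
    ∃ y : Fin m → Fin n → ℝ, (∀ p q, (p, q) ∉ K → y p q = 0) ∧
      (∀ p q, y p q < 0 → (p, q) ∈ F) ∧
      boundary y = Pi.single u 1 - Pi.single v 1 := by
  induction h with
  | refl => exact ⟨0, fun _ _ _ => rfl, fun _ _ h => (lt_irrefl _ h).elim, by simp⟩
  | @tail c d _ hcd ih =>
    obtain ⟨y, hyK, hyF, hy⟩ := ih
    match c, d, hcd with
    | .inl a, .inr b, hab =>
      refine ⟨y + edgeFlow a b, fun p q hpq => ?_, fun p q hpq => ?_, ?_⟩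
      · simp [hyK p q hpq, edgeFlow_eq_zero (ne_of_mem_of_not_mem hab hpq).symm]
      · exact hyF p q (by linarith [edgeFlow_nonneg a b p q, show y p q + _ < 0 from hpq])
      · rw [map_add, hy, boundary_edgeFlow]; abel
    | .inr b, .inl a, hab =>
      refine ⟨y - edgeFlow a b, fun p q hpq => ?_, fun p q hpq => ?_, ?_⟩
      · simp [hyK p q hpq, edgeFlow_eq_zero (ne_of_mem_of_not_mem (hFK hab) hpq).symm]
      · by_cases he : (p, q) = (a, b)
        · rwa [he]
        · exact hyF p q (by simpa [edgeFlow_eq_zero he] using hpq)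
      · rw [map_sub, hy, boundary_edgeFlow]; abel

/-- Push flow around the cycle formed by the residual path and the edge `(a, b)`. -/
theorem exists_pos_of_reflTransGen {x : Fin m → Fin n → ℝ}
    (hx : x ∈ transportationPolytope ν μ K) {a : Fin m} {b : Fin n} (hab : (a, b) ∈ K)
    (h : ReflTransGen (residualStep (supportEdges K x) K) (.inr b) (.inl a)) :
    ∃ z ∈ transportationPolytope ν μ K, 0 < z a b := by
  by_cases hxab : 0 < x a b
  · exact ⟨x, hx, hxab⟩
  have hxab0 : x a b = 0 := le_antisymm (not_lt.1 hxab) (hx.1 a b)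
  obtain ⟨y, hyK, hyF, hy⟩ := exists_flow_of_reflTransGen_residualStep supportEdges_subset h
  have hyab : 0 ≤ y a b := not_lt.1 fun hneg => hxab (Finset.mem_filter.1 (hyF a b hneg)).2
  obtain ⟨ε, hε, hmem⟩ : ∃ ε : ℝ, 0 < ε ∧ x + ε • (y + edgeFlow a b) ∈
      transportationPolytope ν μ K := by
    refine exists_pos_add_smul_mem hx (fun p q hpq => ?_) ?_ (fun p q hpq => ?_)
    · simp [hyK p q hpq, edgeFlow_eq_zero (ne_of_mem_of_not_mem hab hpq).symm]
    · rw [map_add, hy, boundary_edgeFlow]; abel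
    · have : y p q < 0 := by
        linarith [edgeFlow_nonneg a b p q, show y p q + edgeFlow a b p q < 0 from hpq]
      exact (Finset.mem_filter.1 (hyF p q this)).2
  refine ⟨_, hmem, ?_⟩
  simp only [Pi.add_apply, Pi.smul_apply, smul_eq_mul, hxab0, edgeFlow_self]
  positivity

theorem sum_supply_eq_add_of_closed {z : Fin m → Fin n → ℝ}
    (hz : z ∈ transportationPolytope ν μ K) {S : Finset (Fin m)} {J : Finset (Fin n)}
    (hSJ : ∀ a ∈ S, ∀ b, (a, b) ∈ K → b ∈ J) :
    ∑ b ∈ J, μ b = ∑ a ∈ S, ν a + ∑ a ∈ Sᶜ, ∑ b ∈ J, z a b := by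
  obtain ⟨-, hzr, hzc, hzK⟩ := hz
  have hrow : ∀ a ∈ S, ∑ b ∈ J, z a b = ν a := fun a ha => by
    rw [← hzr a, Finset.sum_subset (Finset.subset_univ J)]
    exact fun b _ hb => hzK a b fun hab => hb (hSJ a ha b hab)
  rw [← Finset.sum_congr rfl hrow, Finset.sum_add_sum_compl, Finset.sum_comm]
  exact Finset.sum_congr rfl fun b _ => (hzc b).symm

theorem eq_zero_of_closed {x z : Fin m → Fin n → ℝ}
    (hx : x ∈ transportationPolytope ν μ K) (hz : z ∈ transportationPolytope ν μ K)
    {S : Finset (Fin m)} {J : Finset (Fin n)} (hSJ : ∀ a ∈ S, ∀ b, (a, b) ∈ K → b ∈ J)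
    (hxSJ : ∀ a ∉ S, ∀ b ∈ J, x a b = 0) {a : Fin m} {b : Fin n} (ha : a ∉ S)
    (hb : b ∈ J) : z a b = 0 := by
  have hcut : ∑ a ∈ Sᶜ, ∑ b ∈ J, z a b = 0 := by
    have :=
      (sum_supply_eq_add_of_closed hx hSJ).symm.trans (sum_supply_eq_add_of_closed hz hSJ)
    rw [Finset.sum_eq_zero fun a ha => Finset.sum_eq_zero fun b hb =>
      hxSJ a (Finset.mem_compl.1 ha) b hb] at this
    linarith
  have hnonneg : ∀ a ∈ Sᶜ, 0 ≤ ∑ b ∈ J, z a b := fun a _ =>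
    Finset.sum_nonneg fun b _ => hz.1 a b
  have hrow := (Finset.sum_eq_zero_iff_of_nonneg hnonneg).1 hcut a (Finset.mem_compl.2 ha)
  exact (Finset.sum_eq_zero_iff_of_nonneg fun b _ => hz.1 a b).1 hrow b hb

/-- The nodes reachable from `b` in the residual graph of `x` form a cut into which `x`, and
therefore every point of the polytope, sends no flow. -/
theorem reflTransGen_of_pos {x z : Fin m → Fin n → ℝ}
    (hx : x ∈ transportationPolytope ν μ K) (hz : z ∈ transportationPolytope ν μ K)
    {a : Fin m} {b : Fin n} (hzab : 0 < z a b) :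
    ReflTransGen (residualStep (supportEdges K x) K) (.inr b) (.inl a) := by
  set r := ReflTransGen (residualStep (supportEdges K x) K) (.inr b)
  let S : Finset (Fin m) := Finset.univ.filter fun a' => r (.inl a')
  let J : Finset (Fin n) := Finset.univ.filter fun b' => r (.inr b')
  have hSJ : ∀ a' ∈ S, ∀ b', (a', b') ∈ K → b' ∈ J := fun a' ha' b' hab' => by
    simp only [S, J, Finset.mem_filter, Finset.mem_univ, true_and] at ha' ⊢
    exact ha'.tail hab'
  have hxSJ : ∀ a' ∉ S, ∀ b' ∈ J, x a' b' = 0 := fun a' ha' b' hb' => by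
    simp only [S, J, Finset.mem_filter, Finset.mem_univ, true_and] at ha' hb'
    by_contra hne
    have hK : (a', b') ∈ K := by_contra fun hK => hne (hx.2.2.2 a' b' hK)
    exact ha' (hb'.tail (Finset.mem_filter.2 ⟨hK, lt_of_le_of_ne (hx.1 a' b') (Ne.symm hne)⟩))
  by_contra ha
  have hb : b ∈ J := Finset.mem_filter.2 ⟨Finset.mem_univ _, .refl⟩
  exact hzab.ne' (eq_zero_of_closed hx hz hSJ hxSJ (by simpa [S] using ha) hb)

theorem not_mem_redundantEdges_iff {x : Fin m → Fin n → ℝ}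
    (hx : x ∈ transportationPolytope ν μ K) {a : Fin m} {b : Fin n} (hab : (a, b) ∈ K) :
    (a, b) ∉ redundantEdges ν μ K ↔
      ReflTransGen (residualStep (supportEdges K x) K) (.inr b) (.inl a) := by
  simp only [redundantEdges, Finset.mem_filter, hab, true_and, not_forall]
  constructor
  · rintro ⟨z, hz, hzab⟩
    exact reflTransGen_of_pos hx hz (lt_of_le_of_ne (hz.1 a b) (Ne.symm hzab))
  · intro h
    obtain ⟨z, hz, hzab⟩ := exists_pos_of_reflTransGen hx hab h
    exact ⟨z, hz, hzab.ne'⟩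

end Residual

section Components

variable {m n : ℕ} {F K : Finset (Fin m × Fin n)}

theorem bipartiteGraph_adj_inl_inr {a : Fin m} {b : Fin n} :
    (bipartiteGraph F).Adj (.inl a) (.inr b) ↔ (a, b) ∈ F := by
  simp [bipartiteGraph]

theorem bipartiteGraph_adj_iff {u v : Fin m ⊕ Fin n} :
    (bipartiteGraph F).Adj u v ↔ ∃ a b, (a, b) ∈ F ∧
      (u = .inl a ∧ v = .inr b ∨ u = .inr b ∧ v = .inl a) := by
  rcases u with a | b <;> rcases v with a' | b' <;> simp [bipartiteGraph]

theorem bipartiteGraph_mono {F' : Finset (Fin m × Fin n)} (h : F ⊆ F') :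
    bipartiteGraph F ≤ bipartiteGraph F' := fun _ _ huv => by
  obtain ⟨a, b, hab, hor⟩ := bipartiteGraph_adj_iff.1 huv
  exact bipartiteGraph_adj_iff.2 ⟨a, b, h hab, hor⟩

theorem residualStep_of_adj (hFK : F ⊆ K) {u v : Fin m ⊕ Fin n}
    (h : (bipartiteGraph F).Adj u v) : residualStep F K u v := by
  obtain ⟨a, b, hab, ⟨rfl, rfl⟩ | ⟨rfl, rfl⟩⟩ := bipartiteGraph_adj_iff.1 h
  exacts [hFK hab, hab]

theorem reflTransGen_residualStep_of_reachable (hFK : F ⊆ K) {u v : Fin m ⊕ Fin n}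
    (h : (bipartiteGraph F).Reachable u v) : ReflTransGen (residualStep F K) u v := by
  obtain ⟨p⟩ := h
  induction p with
  | nil => exact .refl
  | cons hadj _ ih => exact .head (residualStep_of_adj hFK hadj) ih

/-- For `F = E ∖ E_r` and `K = E` this is `crpRel ν μ E`. -/
def crossRel (F K : Finset (Fin m × Fin n)) (c c' : (bipartiteGraph F).ConnectedComponent) :
    Prop :=
  c ≠ c' ∧ ∃ a b, (a, b) ∈ K ∧ (bipartiteGraph F).connectedComponentMk (.inl a) = c ∧
    (bipartiteGraph F).connectedComponentMk (.inr b) = c'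

theorem reflTransGen_residualStep_iff (hFK : F ⊆ K) {u v : Fin m ⊕ Fin n} :
    ReflTransGen (residualStep F K) u v ↔
      ReflTransGen (crossRel F K) ((bipartiteGraph F).connectedComponentMk u)
        ((bipartiteGraph F).connectedComponentMk v) := by
  set G := bipartiteGraph F
  constructor
  · intro h
    induction h with
    | refl => exact .refl
    | @tail c d _ hcd ih =>
      by_cases hmk : G.connectedComponentMk c = G.connectedComponentMk d
      · rwa [← hmk]
      refine ih.tail ⟨hmk, ?_⟩
      match c, d, hcd with
      | .inl a, .inr b, hab => exact ⟨a, b, hab, rfl, rfl⟩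
      | .inr b, .inl a, hab =>
        exact (hmk (SimpleGraph.ConnectedComponent.sound
          (bipartiteGraph_adj_inl_inr.2 hab).reachable).symm).elim
  · suffices ∀ c, ReflTransGen (crossRel F K) (G.connectedComponentMk u) c →
        ∀ v, G.connectedComponentMk v = c → ReflTransGen (residualStep F K) u v from
      fun h => this _ h v rfl
    intro c h
    induction h with
    | refl => exact fun v hv =>
        reflTransGen_residualStep_of_reachable hFK (SimpleGraph.ConnectedComponent.exact hv.symm)
    | tail _ hcd ih =>
      obtain ⟨-, a, b, hab, ha, hb⟩ := hcd
      have hstep : residualStep F K (.inl a) (.inr b) := hab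
      exact fun v hv => ((ih _ ha).tail hstep).trans
        (reflTransGen_residualStep_of_reachable hFK
          (SimpleGraph.ConnectedComponent.exact (hb.trans hv.symm)))

noncomputable def cyclicEdges (F K : Finset (Fin m × Fin n)) : Finset (Fin m × Fin n) :=
  K.filter fun e => ReflTransGen (crossRel F K)
    ((bipartiteGraph F).connectedComponentMk (.inr e.2))
    ((bipartiteGraph F).connectedComponentMk (.inl e.1))

end Components

section Redundancy

variable {m n : ℕ} {ν : Fin m → ℝ} {μ : Fin n → ℝ} {E K : Finset (Fin m × Fin n)}

/-- Average `x₀` with one witness of positivity for every nonredundant edge. -/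
theorem exists_supportEdges_eq (hne : (transportationPolytope ν μ E).Nonempty) :
    ∃ x ∈ transportationPolytope ν μ E, supportEdges E x = E \ redundantEdges ν μ E := by
  obtain ⟨x₀, hx₀⟩ := hne
  have hwit : ∀ f : Fin m × Fin n, ∃ y ∈ transportationPolytope ν μ E,
      f ∈ E \ redundantEdges ν μ E → 0 < y f.1 f.2 := by
    intro f
    by_cases hf : f ∈ E \ redundantEdges ν μ E
    · obtain ⟨y, hy, hyf⟩ : ∃ y ∈ transportationPolytope ν μ E, y f.1 f.2 ≠ 0 := by
        simpa [redundantEdges, (Finset.mem_sdiff.1 hf).1] using (Finset.mem_sdiff.1 hf).2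
      exact ⟨y, hy, fun _ => lt_of_le_of_ne (hy.1 _ _) (Ne.symm hyf)⟩
    · exact ⟨x₀, hx₀, fun h => (hf h).elim⟩
  choose g hgT hgpos using hwit
  let y : Option (Fin m × Fin n) → Fin m → Fin n → ℝ := fun e => e.elim x₀ g
  have hyT : ∀ e, y e ∈ transportationPolytope ν μ E := by
    rintro (_ | f)
    exacts [hx₀, hgT f]
  set w : ℝ := (Fintype.card (Option (Fin m × Fin n)) : ℝ)⁻¹
  have hw : 0 < w := by positivity
  have hsum : ∑ _ : Option (Fin m × Fin n), w = 1 := by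
    rw [Finset.sum_const, Finset.card_univ, nsmul_eq_mul]
    exact mul_inv_cancel₀ (by positivity)
  refine ⟨∑ e, w • y e,
    convex_transportationPolytope.sum_mem (fun _ _ => hw.le) hsum fun e _ => hyT e, ?_⟩
  ext ⟨a, b⟩
  have hentry : (∑ e, w • y e) a b = ∑ e, w * y e a b := by simp [Finset.sum_apply]
  simp only [supportEdges, Finset.mem_filter, hentry,
    Finset.sum_pos_iff_of_nonneg fun e _ => mul_nonneg hw.le ((hyT e).1 a b),
    Finset.mem_univ, true_and, mul_pos_iff_of_pos_left hw]
  constructor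
  · rintro ⟨hab, e, he⟩
    refine Finset.mem_sdiff.2 ⟨hab, fun hr => he.ne' ?_⟩
    exact (Finset.mem_filter.1 hr).2 _ (hyT e)
  · intro hab
    exact ⟨(Finset.mem_sdiff.1 hab).1, some (a, b), hgpos _ hab⟩

theorem supportEdges_eq_of_subset {x : Fin m → Fin n → ℝ}
    (hx : x ∈ transportationPolytope ν μ E) (hEK : E ⊆ K) :
    supportEdges K x = supportEdges E x := by
  ext ⟨a, b⟩
  simp only [supportEdges, Finset.mem_filter]
  exact ⟨fun ⟨_, h⟩ => ⟨by_contra fun hab => h.ne' (hx.2.2.2 a b hab), h⟩,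
    fun ⟨hab, h⟩ => ⟨hEK hab, h⟩⟩

theorem sdiff_redundantEdges_eq_cyclicEdges {x : Fin m → Fin n → ℝ}
    (hx : x ∈ transportationPolytope ν μ K) :
    K \ redundantEdges ν μ K = cyclicEdges (supportEdges K x) K := by
  ext ⟨a, b⟩
  simp only [cyclicEdges, Finset.mem_sdiff, Finset.mem_filter, and_congr_right_iff]
  intro hab
  rw [not_mem_redundantEdges_iff hx hab,
    reflTransGen_residualStep_iff supportEdges_subset]

theorem not_transGen_crpRel_self (hne : (transportationPolytope ν μ E).Nonempty)
    (c : (bipartiteGraph (E \ redundantEdges ν μ E)).ConnectedComponent) :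
    ¬ TransGen (crpRel ν μ E) c c := by
  obtain ⟨x, hx, hsupp⟩ := exists_supportEdges_eq hne
  have hchar := sdiff_redundantEdges_eq_cyclicEdges hx
  rw [hsupp] at hchar
  intro hc
  obtain ⟨c', ⟨hne', a, b, hab, ha, hb⟩, hback⟩ := TransGen.head'_iff.1 hc
  have hF : (a, b) ∈ E \ redundantEdges ν μ E := by
    rw [hchar, cyclicEdges, Finset.mem_filter]
    exact ⟨hab, by rwa [ha, hb]⟩
  exact hne' (ha.symm.trans (SimpleGraph.ConnectedComponent.sound
    (bipartiteGraph_adj_inl_inr.2 hF).reachable) |>.trans hb)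

end Redundancy

section Counting

def mutualReachSetoid {α : Type*} (R : α → α → Prop) : Setoid α where
  r a b := ReflTransGen R a b ∧ ReflTransGen R b a
  iseqv := ⟨fun _ => ⟨.refl, .refl⟩, fun h => ⟨h.2, h.1⟩,
    fun h₁ h₂ => ⟨h₁.1.trans h₂.1, h₂.2.trans h₁.2⟩⟩

@[simp] theorem mutualReachSetoid_apply {α : Type*} {R : α → α → Prop} {a b : α} :
    mutualReachSetoid R a b ↔ ReflTransGen R a b ∧ ReflTransGen R b a := Iff.rfl

def collapseSetoid {α : Type*} (V : Set α) : Setoid α where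
  r a b := a = b ∨ a ∈ V ∧ b ∈ V
  iseqv := ⟨fun _ => .inl rfl, fun h => h.imp Eq.symm And.symm, fun h₁ h₂ => by
    rcases h₁ with rfl | ⟨ha, hb⟩
    · exact h₂
    · rcases h₂ with rfl | ⟨-, hc⟩
      exacts [.inr ⟨ha, hb⟩, .inr ⟨ha, hc⟩]⟩

@[simp] theorem collapseSetoid_apply {α : Type*} {V : Set α} {a b : α} :
    collapseSetoid V a b ↔ a = b ∨ a ∈ V ∧ b ∈ V := Iff.rfl

theorem card_quotient_collapseSetoid {α : Type*} [Finite α] (V : Set α) :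
    Nat.card (Quotient (collapseSetoid V)) = Nat.card α - (V.ncard - 1) := by
  rcases V.eq_empty_or_nonempty with rfl | ⟨v₀, hv₀⟩
  · refine (Nat.card_eq_of_bijective (Quotient.mk _)
      ⟨fun a b h => ?_, Quotient.mk_surjective⟩).symm.trans (by simp)
    simpa using (Quotient.exact h : collapseSetoid ∅ a b)
  · let r : α → α := fun a => if a ∈ V then v₀ else a
    have hker : Setoid.ker r = collapseSetoid V := by
      ext a b
      by_cases ha : a ∈ V <;> by_cases hb : b ∈ V <;>
        simp [Setoid.ker_def, r, ha, hb] <;> grind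
    have hrange : Set.range r = insert v₀ Vᶜ := by
      ext a
      by_cases ha : a ∈ V <;> simp [r, ha] <;> grind
    have hcard := Set.ncard_add_ncard_compl V
    have hpos := (Set.ncard_pos V.toFinite).2 ⟨v₀, hv₀⟩
    rw [← hker, Nat.card_congr (Setoid.quotientKerEquivRange r), Nat.card_coe_set_eq, hrange,
      Set.ncard_insert_of_notMem (by simpa using hv₀)]
    omega

variable {V : Type*} {G G' : SimpleGraph V}

theorem SimpleGraph.card_connectedComponent_eq_card_quotient (s : Setoid G.ConnectedComponent)
    (hreach : ∀ u v, s (G.connectedComponentMk u) (G.connectedComponentMk v) → G'.Reachable u v)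
    (hadj : ∀ u v, G'.Adj u v → s (G.connectedComponentMk u) (G.connectedComponentMk v)) :
    Nat.card G'.ConnectedComponent = Nat.card (Quotient s) := by
  have hwalk : ∀ u v, G'.Reachable u v →
      s (G.connectedComponentMk u) (G.connectedComponentMk v) := by
    rintro u v ⟨p⟩
    induction p with
    | nil => exact s.refl _
    | cons h _ ih => exact s.trans (hadj _ _ h) ih
  let f : G'.ConnectedComponent → Quotient s :=
    SimpleGraph.ConnectedComponent.lift (fun u => ⟦G.connectedComponentMk u⟧)
      fun u v p _ => Quotient.sound (hwalk u v p.reachable)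
  refine Nat.card_eq_of_bijective f ⟨fun c c' h => ?_, fun y => ?_⟩
  · induction c using SimpleGraph.ConnectedComponent.ind
    induction c' using SimpleGraph.ConnectedComponent.ind
    exact SimpleGraph.ConnectedComponent.sound (hreach _ _ (Quotient.exact h))
  · induction y using Quotient.ind with | _ c => ?_
    induction c using SimpleGraph.ConnectedComponent.ind with | _ u => ?_
    exact ⟨G'.connectedComponentMk u, rfl⟩

end Counting

section Merging

variable {α : Type*} {R R₀ : α → α → Prop} {p q : α}

theorem transGen_or_through_arc (hR : ∀ a b, R a b → R₀ a b ∨ a = p ∧ b = q) {a b : α}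
    (h : TransGen R a b) :
    TransGen R₀ a b ∨ ReflTransGen R a p ∧ R p q ∧ ReflTransGen R q b := by
  induction h with
  | single hab =>
    rcases hR _ _ hab with h | ⟨rfl, rfl⟩
    exacts [.inl (.single h), .inr ⟨.refl, hab, .refl⟩]
  | @tail c d hac hcd ih =>
    rcases ih with ih | ⟨hap, hpq, hqc⟩
    · rcases hR _ _ hcd with h | ⟨rfl, rfl⟩
      exacts [.inl (ih.tail h), .inr ⟨hac.to_reflTransGen, hcd, .refl⟩]
    · exact .inr ⟨hap, hpq, hqc.tail hcd⟩

/-- Adding a single arc `p → q` to an acyclic relation, all cycles pass through that arc, so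
the points lying on a cycle form one strongly connected class. -/
theorem mutualReachSetoid_eq_collapseSetoid (hR : ∀ a b, R a b → R₀ a b ∨ a = p ∧ b = q)
    (hacyc : ∀ a, ¬ TransGen R₀ a a) :
    mutualReachSetoid R = collapseSetoid {a | TransGen R a a} := by
  have hcyc : ∀ a, TransGen R a a → ReflTransGen R a p ∧ R p q ∧ ReflTransGen R q a :=
    fun a ha => (transGen_or_through_arc hR ha).resolve_left (hacyc a)
  ext a b
  simp only [mutualReachSetoid_apply, collapseSetoid_apply, Set.mem_ofPred_eq]
  constructor
  · rintro ⟨hab, hba⟩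
    rcases reflTransGen_iff_eq_or_transGen.1 hab with rfl | hab
    · exact .inl rfl
    · exact .inr ⟨hab.trans_left hba, TransGen.trans_right hba hab⟩
  · rintro (rfl | ⟨ha, hb⟩)
    · exact ⟨.refl, .refl⟩
    obtain ⟨hap, hpq, hqa⟩ := hcyc a ha
    obtain ⟨hbp, -, hqb⟩ := hcyc b hb
    exact ⟨(hap.tail hpq).trans hqb, (hbp.tail hpq).trans hqa⟩

end Merging

section CyclicEdges

variable {m n : ℕ} {F K : Finset (Fin m × Fin n)}

theorem subset_cyclicEdges (hFK : F ⊆ K) : F ⊆ cyclicEdges F K := fun ⟨a, b⟩ hab => by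
  refine Finset.mem_filter.2 ⟨hFK hab, ?_⟩
  rw [SimpleGraph.ConnectedComponent.sound (bipartiteGraph_adj_inl_inr.2 hab).reachable]

theorem mutualReach_of_adj_cyclicEdges {u v : Fin m ⊕ Fin n}
    (h : (bipartiteGraph (cyclicEdges F K)).Adj u v) :
    mutualReachSetoid (crossRel F K) ((bipartiteGraph F).connectedComponentMk u)
      ((bipartiteGraph F).connectedComponentMk v) := by
  set G := bipartiteGraph F
  suffices ∀ a b, (a, b) ∈ cyclicEdges F K →
      mutualReachSetoid (crossRel F K) (G.connectedComponentMk (.inl a))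
        (G.connectedComponentMk (.inr b)) by
    obtain ⟨a, b, hab, ⟨rfl, rfl⟩ | ⟨rfl, rfl⟩⟩ := bipartiteGraph_adj_iff.1 h
    exacts [this a b hab, ⟨(this a b hab).2, (this a b hab).1⟩]
  intro a b hab
  obtain ⟨habK, hback⟩ := Finset.mem_filter.1 hab
  refine ⟨?_, hback⟩
  by_cases hmk : G.connectedComponentMk (.inl a) = G.connectedComponentMk (.inr b)
  · rw [hmk]
  · exact .single ⟨hmk, a, b, habK, rfl, rfl⟩

/-- Every arc of a `crossRel` cycle is an edge of `cyclicEdges`, so the components of `G(F)`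
along a cycle merge in the larger graph. -/
theorem reachable_of_mutualReach (hFK : F ⊆ K) {u v : Fin m ⊕ Fin n}
    (h : mutualReachSetoid (crossRel F K) ((bipartiteGraph F).connectedComponentMk u)
      ((bipartiteGraph F).connectedComponentMk v)) :
    (bipartiteGraph (cyclicEdges F K)).Reachable u v := by
  set G := bipartiteGraph F
  have hmono : ∀ {u v}, G.Reachable u v → (bipartiteGraph (cyclicEdges F K)).Reachable u v :=
    fun h => h.mono (bipartiteGraph_mono (subset_cyclicEdges hFK))
  obtain ⟨hfwd, hback⟩ := h
  suffices ∀ c, ReflTransGen (crossRel F K) (G.connectedComponentMk u) c →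
      ReflTransGen (crossRel F K) c (G.connectedComponentMk u) →
      ∀ v, G.connectedComponentMk v = c → (bipartiteGraph (cyclicEdges F K)).Reachable u v from
    this _ hfwd hback v rfl
  intro c hc
  induction hc with
  | refl => exact fun _ v hv => hmono (SimpleGraph.ConnectedComponent.exact hv.symm)
  | @tail c d hc hcd ih =>
    intro hdu v hv
    obtain ⟨a, b, hab, ha, hb⟩ := hcd.2
    have hcyc : (a, b) ∈ cyclicEdges F K := Finset.mem_filter.2 ⟨hab, by
      rw [ha, hb]; exact hdu.trans hc⟩
    exact ((ih (hdu.head hcd) (.inl a) ha).trans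
      (bipartiteGraph_adj_inl_inr.2 hcyc).reachable).trans
      (hmono (SimpleGraph.ConnectedComponent.exact (hb.trans hv.symm)))

theorem card_connectedComponent_cyclicEdges (hFK : F ⊆ K) :
    Nat.card (bipartiteGraph (cyclicEdges F K)).ConnectedComponent =
      Nat.card (Quotient (mutualReachSetoid (crossRel F K))) :=
  SimpleGraph.card_connectedComponent_eq_card_quotient _
    (fun _ _ => reachable_of_mutualReach hFK) fun _ _ => mutualReach_of_adj_cyclicEdges

end CyclicEdges

theorem stmt_16_general {m n : ℕ}
    (ν : Fin m → ℝ) (μ : Fin n → ℝ) (E : Finset (Fin m × Fin n))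
    (hne : (transportationPolytope ν μ E).Nonempty)
    (i : Fin m) (j : Fin n) :
    let G := bipartiteGraph (E \ redundantEdges ν μ E)
    let l₁ := G.connectedComponentMk (Sum.inl i)
    let l₂ := G.connectedComponentMk (Sum.inr j)
    let R' : G.ConnectedComponent → G.ConnectedComponent → Prop :=
      fun a b => crpRel ν μ E a b ∨ (a = l₁ ∧ b = l₂ ∧ l₁ ≠ l₂)
    erpNumber ν μ (insert (i, j) E) =
      erpNumber ν μ E - ({l | Relation.TransGen R' l l}.ncard - 1) := by
  intro G l₁ l₂ R'
  obtain ⟨x, hx, hsupp⟩ := exists_supportEdges_eq hne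
  have hEE' : E ⊆ insert (i, j) E := Finset.subset_insert _ _
  have hR' : R' = crossRel (E \ redundantEdges ν μ E) (insert (i, j) E) := by
    ext c c'
    simp only [R', crpRel, crossRel, Finset.mem_insert, Prod.mk.injEq, or_and_right, exists_or,
      l₁, l₂, G]
    grind
  have hF' : insert (i, j) E \ redundantEdges ν μ (insert (i, j) E) =
      cyclicEdges (E \ redundantEdges ν μ E) (insert (i, j) E) := by
    rw [sdiff_redundantEdges_eq_cyclicEdges (transportationPolytope_mono hEE' hx),
      supportEdges_eq_of_subset hx hEE', hsupp]
  have hcollapse : mutualReachSetoid R' = collapseSetoid {l | TransGen R' l l} :=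
    mutualReachSetoid_eq_collapseSetoid (fun _ _ h => h.imp_right fun h => ⟨h.1, h.2.1⟩)
      (not_transGen_crpRel_self hne)
  calc erpNumber ν μ (insert (i, j) E) = Nat.card (Quotient (mutualReachSetoid R')) := by
        rw [erpNumber, numComponents, hF', hR']
        exact card_connectedComponent_cyclicEdges (Finset.sdiff_subset.trans hEE')
    _ = _ := by rw [hcollapse, card_quotient_collapseSetoid]; rfl

/-- adding one edge: adding `(i,j) ∉ E` decreases the ERP number by
`max(|V_c| − 1, 0)`, where `V_c` is the set of CRP components lying on a cycle of the
CRP-graph augmented with the arc `(l₁, l₂)` of the new edge. -/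
theorem stmt_16 {m n : ℕ} (hm : 1 ≤ m) (hn : 1 ≤ n)
    (ν : Fin m → ℝ) (μ : Fin n → ℝ) (E : Finset (Fin m × Fin n))
    (hν : ∀ i, 0 < ν i) (hμ : ∀ j, 0 < μ j)
    (hne : (transportationPolytope ν μ E).Nonempty)
    (i : Fin m) (j : Fin n) (hij : (i, j) ∉ E) :
    let G := bipartiteGraph (E \ redundantEdges ν μ E)
    let l₁ := G.connectedComponentMk (Sum.inl i)
    let l₂ := G.connectedComponentMk (Sum.inr j)
    let R' : G.ConnectedComponent → G.ConnectedComponent → Prop :=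
      fun a b => crpRel ν μ E a b ∨ (a = l₁ ∧ b = l₂ ∧ l₁ ≠ l₂)
    erpNumber ν μ (insert (i, j) E) =
      erpNumber ν μ E - ({l | Relation.TransGen R' l l}.ncard - 1) :=
  stmt_16_general ν μ E hne i j
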